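/- arXiv:1503.02927 — 2 statements merged into one kernel-verified Lean document; each statement's English description precedes it below -/
import Mathlib

section
/- For positive definite matrices A1, A2 and positive semidefinite matrix B of the same size, if A1 ⪯ A2 then det(A1 + B)/det(A1) ≥ det(A2 + B)/det(A2). -/
/-!
Write `B = R⋆R`. The matrix determinant lemma gives `det (A + B) / det A = det (1 + R A⁻¹ R⋆)`,
so the claim follows from two monotonicity facts in the Loewner order: matrix inversion is
antitone on positive definite matrices (compare the two Schur complements of the block matrix
`[[A₂, 1], [1, A₁⁻¹]]`), and the determinant is monotone on them (`B = A + S⋆S` gives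
`det B = det A · det (1 + S A⁻¹ S⋆)`, and a matrix `≥ 1` has all eigenvalues `≥ 1`).
-/

open Matrix
open scoped MatrixOrder ComplexOrder

namespace Matrix

variable {n 𝕜 : Type*} [Fintype n] [DecidableEq n] [RCLike 𝕜]

theorem PosDef.inv_anti {A B : Matrix n n 𝕜} (hA : A.PosDef) (hAB : A ≤ B) : B⁻¹ ≤ A⁻¹ := by
  have hB : B.PosDef := by simpa using hA.add_posSemidef (le_iff.mp hAB)
  have := hA.isUnit.invertible
  have := hB.isUnit.invertible
  have := hA.inv.isUnit.invertible
  have h := (PosDef.fromBlocks₂₂ B 1 hA.inv).mpr (by simpa using le_iff.mp hAB)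
  simpa [le_iff] using (PosDef.fromBlocks₁₁ 1 A⁻¹ hB).mp h

theorem one_le_det_of_one_le {H : Matrix n n 𝕜} (h : 1 ≤ H) : 1 ≤ H.det := by
  have hH : H.IsHermitian := (nonneg_iff_posSemidef.mp (zero_le_one.trans h)).isHermitian
  have heig : ∀ i, 1 ≤ hH.eigenvalues i := fun i =>
    (algebraMap_le_iff_le_spectrum (r := (1 : ℝ)) hH.isSelfAdjoint).mp (by simpa using h) _
      (hH.eigenvalues_mem_spectrum_real i)
  rw [hH.det_eq_prod_eigenvalues, ← RCLike.ofReal_prod]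
  exact_mod_cast Finset.one_le_prod fun i _ => heig i

theorem PosDef.det_add_star_mul_self {A : Matrix n n 𝕜} (hA : A.PosDef) (R : Matrix n n 𝕜) :
    (A + star R * R).det = A.det * (1 + R * A⁻¹ * star R).det :=
  det_add_mul _ _ ((isUnit_iff_isUnit_det A).mp hA.isUnit)

theorem PosDef.det_le_det {A B : Matrix n n 𝕜} (hA : A.PosDef) (hAB : A ≤ B) :
    A.det ≤ B.det := by
  obtain ⟨R, hR⟩ := CStarAlgebra.nonneg_iff_eq_star_mul_self.mp (sub_nonneg.mpr hAB)
  have hB : B = A + star R * R := by rw [← hR]; abel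
  have hC : 1 ≤ 1 + R * A⁻¹ * star R :=
    le_add_of_nonneg_right (star_right_conjugate_nonneg hA.inv.posSemidef.nonneg R)
  rw [hB, hA.det_add_star_mul_self]
  exact le_mul_of_one_le_right hA.det_pos.le (one_le_det_of_one_le hC)

end Matrix

theorem stmt_0 {n : ℕ} (A1 A2 B : Matrix (Fin n) (Fin n) ℝ)
    (hA1 : A1.PosDef) (hA2 : A2.PosDef) (hB : B.PosSemidef)
    (hle : (A2 - A1).PosSemidef) :
    (A1 + B).det / A1.det ≥ (A2 + B).det / A2.det := by
  obtain ⟨R, rfl⟩ := CStarAlgebra.nonneg_iff_eq_star_mul_self.mp hB.nonneg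
  rw [hA1.det_add_star_mul_self, hA2.det_add_star_mul_self,
    mul_div_cancel_left₀ _ hA1.det_pos.ne', mul_div_cancel_left₀ _ hA2.det_pos.ne']
  have hinv : A2⁻¹ ≤ A1⁻¹ := hA1.inv_anti (le_iff.mpr hle)
  have hpos : (1 + R * A2⁻¹ * star R).PosDef :=
    PosDef.one.add_posSemidef (star_right_conjugate_nonneg hA2.inv.posSemidef.nonneg R).posSemidef
  exact hpos.det_le_det (add_le_add_right (star_right_conjugate_le_conjugate hinv R) 1)
end

section
/- Fischer's inequality: for a symmetric positive semidefinite block matrix M with diagonal blocks M11 (of size m×m) and M22 (of size k×k), det(M) ≤ det(M11)·det(M22). -/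
/-!
If `M` is singular the inequality holds because the diagonal blocks are positive semidefinite.
Otherwise `M` is positive definite, hence so is `A = M₁₁`, and the Schur complement formula gives
`det M = det A · det (D - Bᴴ A⁻¹ B)`. The Schur complement is positive semidefinite and differs from
`D` by the positive semidefinite matrix `Bᴴ A⁻¹ B`, so it suffices that `det` is monotone under adding
a positive semidefinite matrix: `S + P = √S (1 + Q) √S` with `Q` positive semidefinite, and
`det (1 + Q) = ∏ (1 + λᵢ) ≥ 1`.
-/

open Matrix

namespace Matrix

variable {n : Type*} [Fintype n] [DecidableEq n]

theorem IsHermitian.det_cfc {𝕜 : Type*} [RCLike 𝕜] {A : Matrix n n 𝕜} (hA : A.IsHermitian)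
    (f : ℝ → ℝ) : (cfc f A).det = ∏ i, (f (hA.eigenvalues i) : 𝕜) := by
  simp [hA.cfc_eq, IsHermitian.cfc, -Unitary.conjStarAlgAut_apply]

theorem PosSemidef.one_le_det_one_add {Q : Matrix n n ℝ} (hQ : Q.PosSemidef) :
    1 ≤ (1 + Q).det := by
  have hQsa : IsSelfAdjoint Q := hQ.1
  have hcfc : 1 + Q = cfc (fun x : ℝ => 1 + x) Q := by
    rw [cfc_const_add (1 : ℝ) (fun x => x) Q, cfc_id' ℝ Q, Algebra.algebraMap_eq_smul_one, one_smul]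
  rw [hcfc, hQ.1.det_cfc]
  exact Finset.one_le_prod fun i _ => by simpa using hQ.eigenvalues_nonneg i

open scoped MatrixOrder in
theorem PosDef.det_le_det_add {S P : Matrix n n ℝ} (hS : S.PosDef) (hP : P.PosSemidef) :
    S.det ≤ (S + P).det := by
  set R := CFC.sqrt S
  have hR : R.PosSemidef := (CFC.sqrt_nonneg S).posSemidef
  have hRR : R * R = S := CFC.sqrt_mul_sqrt_self S hS.posSemidef.nonneg
  have hRunit : IsUnit R.det := by
    refine isUnit_of_mul_isUnit_left (y := R.det) ?_
    rw [← det_mul, hRR]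
    exact (isUnit_iff_isUnit_det S).mp hS.isUnit
  have hQ : (R⁻¹ * P * R⁻¹).PosSemidef := by
    have := hP.conjTranspose_mul_mul_same R⁻¹
    rwa [conjTranspose_nonsing_inv, hR.1.eq] at this
  have hfactor : S + P = R * (1 + R⁻¹ * P * R⁻¹) * R := by
    rw [mul_add, add_mul, mul_one, hRR, ← mul_assoc, ← mul_assoc, mul_nonsing_inv R hRunit,
      one_mul, mul_assoc, nonsing_inv_mul R hRunit, mul_one]
  calc S.det = R.det * 1 * R.det := by rw [mul_one, ← det_mul, hRR]
    _ ≤ R.det * (1 + R⁻¹ * P * R⁻¹).det * R.det := by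
      have hRdet : 0 ≤ R.det := hR.det_nonneg
      gcongr
      exact hQ.one_le_det_one_add
    _ = (S + P).det := by rw [hfactor, det_mul, det_mul]

theorem PosSemidef.det_le_det_add {S P : Matrix n n ℝ} (hS : S.PosSemidef) (hP : P.PosSemidef) :
    S.det ≤ (S + P).det := by
  rcases eq_or_ne S.det 0 with h0 | h0
  · exact h0 ▸ (hS.add hP).det_nonneg
  · exact (hS.posDef_iff_det_ne_zero.mpr h0).det_le_det_add hP

theorem PosSemidef.det_fromBlocks_le {m : Type*} [Fintype m] [DecidableEq m] {A : Matrix m m ℝ}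
    {B : Matrix m n ℝ} {D : Matrix n n ℝ} (hA : A.PosDef)
    (hM : (fromBlocks A B Bᴴ D).PosSemidef) :
    (fromBlocks A B Bᴴ D).det ≤ A.det * D.det := by
  have := hA.isUnit.invertible
  have hS : (D - Bᴴ * A⁻¹ * B).PosSemidef := (hA.fromBlocks₁₁ B D).mp hM
  have hP : (Bᴴ * A⁻¹ * B).PosSemidef := by
    simpa using hA.inv.posSemidef.conjTranspose_mul_mul_same B
  rw [det_fromBlocks₁₁, invOf_eq_nonsing_inv]
  gcongr
  · exact hA.det_pos.le
  · simpa using hS.det_le_det_add hP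

end Matrix

theorem stmt_1 {m k : ℕ} (M : Matrix (Fin m ⊕ Fin k) (Fin m ⊕ Fin k) ℝ)
    (hM : M.PosSemidef) :
    M.det ≤ (M.toBlocks₁₁).det * (M.toBlocks₂₂).det := by
  rcases eq_or_ne M.det 0 with h0 | h0
  · rw [h0]
    exact mul_nonneg (hM.submatrix Sum.inl).det_nonneg (hM.submatrix Sum.inr).det_nonneg
  have hpd : M.toBlocks₁₁.PosDef :=
    (hM.posDef_iff_det_ne_zero.mpr h0).submatrix Sum.inl_injective
  obtain ⟨A, B, C, D, rfl⟩ : ∃ A B C D, M = fromBlocks A B C D :=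
    ⟨_, _, _, _, (fromBlocks_toBlocks M).symm⟩
  obtain rfl : Bᴴ = C := (isHermitian_fromBlocks_iff.mp hM.1).2.1
  simpa using hM.det_fromBlocks_le (by simpa using hpd)
end
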